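/- arXiv:2105.04280 — 5 statements merged into one kernel-verified Lean document; each statement's English description precedes it below -/
import Mathlib

section
/- Let G be a sub-semigroup of GL_2(ℂ). For S = (s_ij) ∈ G, let 𝔄_S := {α ∈ ℂ : s_21·α² + (s_11 − s_22)·α − s_12 = 0}. Then the ℂ-linear span of G equals M_2(ℂ) if and only if ⋂_{S ∈ G} 𝔄_S = ∅ and there exists B = (b_ij) ∈ G with b_21 ≠ 0. -/
/-!
Write `wedge x y = x 0 * y 1 - x 1 * y 0`. Then `wedge ![-α, 1] (S *ᵥ ![-α, 1])` is the quadratic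
defining `𝔄_S`, and `wedge ![1, 0] (S *ᵥ ![1, 0]) = S 1 0`. So the right-hand side says that no
line `K ∙ ![-α, 1]` or `K ∙ ![1, 0]`, i.e. no line at all, is invariant under all of `G`.

If the span of `G` is everything, `G` has no common eigenvector `x`: `S ↦ wedge x (S *ᵥ x)` is a
linear form vanishing on `G`, and it is nonzero on a matrix unit.

The converse is Burnside's theorem in dimension two. The span `A` of `G` is closed under
multiplication, and by Cayley–Hamilton it contains `1`, since `G` contains invertible matrices.
Take `B ∈ G` with `B 1 0 ≠ 0` and let `λ` be an eigenvalue of `B`. Then `B - λ` is a rank-one matrix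
`vecMulVec x y` in `A`. Neither `x` nor `y` is an eigenvector of all of `A`, so `A *ᵥ x` and
`y ᵥ* A` both span `K²`. Hence the products `a * vecMulVec x y * b` span `M₂(K)`.
-/

open Matrix Submodule Polynomial

theorem Submodule.mul_mem_span_of_mul_mem {R A : Type*} [CommSemiring R] [Semiring A] [Algebra R A]
    {G : Set A} (hG : ∀ a ∈ G, ∀ b ∈ G, a * b ∈ G) {x y : A} (hx : x ∈ span R G)
    (hy : y ∈ span R G) : x * y ∈ span R G :=
  span_mono (Set.mul_subset_iff.2 hG) (span_mul_span R G G ▸ mul_mem_mul hx hy)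

section Burnside

variable {K n : Type*} [Field K] [Fintype n] [DecidableEq n]

theorem Submodule.eq_top_of_forall_vecMulVec_mem {A : Submodule K (Matrix n n K)}
    (h : ∀ x y : n → K, vecMulVec x y ∈ A) : A = ⊤ := by
  refine eq_top_iff.2 fun M _ => ?_
  rw [matrix_eq_sum_single M]
  refine sum_mem fun i _ => sum_mem fun j _ => ?_
  have : single i j (M i j) = M i j • vecMulVec (Pi.single i 1) (Pi.single j 1) := by
    rw [← single_eq_single_vecMulVec_single, smul_single, smul_eq_mul, mul_one]
  exact this ▸ smul_mem _ _ (h _ _)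

-- `a * vecMulVec x y * b = vecMulVec (a *ᵥ x) (y ᵥ* b)`, and `vecMulVec` is bilinear.
theorem Submodule.eq_top_of_vecMulVec_mem {A : Submodule K (Matrix n n K)}
    (hmul : ∀ a ∈ A, ∀ b ∈ A, a * b ∈ A) {x y : n → K} (hxy : vecMulVec x y ∈ A)
    (hx : span K ((· *ᵥ x) '' (A : Set (Matrix n n K))) = ⊤)
    (hy : span K ((y ᵥ* ·) '' (A : Set (Matrix n n K))) = ⊤) : A = ⊤ := by
  have hsandwich : ∀ a ∈ A, ∀ b ∈ A, vecMulVec (a *ᵥ x) (y ᵥ* b) ∈ A := fun a ha b hb => by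
    rw [← vecMulVec_mul, ← mul_vecMulVec]
    exact hmul _ (hmul _ ha _ hxy) _ hb
  have hleft : ∀ b ∈ A, ∀ p, vecMulVec p (y ᵥ* b) ∈ A := fun b hb p => by
    have : span K ((· *ᵥ x) '' (A : Set (Matrix n n K))) ≤
        A.comap ((vecMulVecBilin K K).flip (y ᵥ* b)) :=
      span_le.2 (by rintro _ ⟨a, ha, rfl⟩; exact hsandwich a ha b hb)
    exact this (hx ▸ mem_top)
  refine eq_top_of_forall_vecMulVec_mem fun p q => ?_
  have : span K ((y ᵥ* ·) '' (A : Set (Matrix n n K))) ≤ A.comap (vecMulVecBilin K K p) :=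
    span_le.2 (by rintro _ ⟨b, hb, rfl⟩; exact hleft b hb p)
  exact this (hy ▸ mem_top)

end Burnside

section FinTwo

variable {K : Type*} [Field K]

def wedge (x y : Fin 2 → K) : K := x 0 * y 1 - x 1 * y 0

theorem wedge_smul_eq_add (x y z : Fin 2 → K) : wedge x y • z = wedge z y • x + wedge x z • y := by
  ext i; fin_cases i <;>
    simp only [wedge, Fin.zero_eta, Fin.mk_one, Pi.add_apply, Pi.smul_apply, smul_eq_mul] <;> ring

theorem span_pair_eq_top_of_wedge_ne_zero {x y : Fin 2 → K} (h : wedge x y ≠ 0) :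
    span K {x, y} = ⊤ :=
  eq_top_iff.2 fun z _ => mem_span_pair.2
    ⟨(wedge x y)⁻¹ * wedge z y, (wedge x y)⁻¹ * wedge x z, by
      rw [mul_smul, mul_smul, ← smul_add, ← wedge_smul_eq_add, inv_smul_smul₀ h]⟩

theorem span_mulVec_eq_top {A : Set (Matrix (Fin 2) (Fin 2) K)} (hone : 1 ∈ A) {x : Fin 2 → K}
    {S : Matrix (Fin 2) (Fin 2) K} (hS : S ∈ A) (h : wedge x (S *ᵥ x) ≠ 0) :
    span K ((· *ᵥ x) '' A) = ⊤ :=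
  top_le_iff.1 <| (span_pair_eq_top_of_wedge_ne_zero h).symm.trans_le <| span_mono <|
    Set.insert_subset ⟨1, hone, one_mulVec x⟩ (Set.singleton_subset_iff.2 ⟨S, hS, rfl⟩)

theorem span_vecMul_eq_top {A : Set (Matrix (Fin 2) (Fin 2) K)} (hone : 1 ∈ A) {y : Fin 2 → K}
    {S : Matrix (Fin 2) (Fin 2) K} (hS : S ∈ A) (h : wedge y (y ᵥ* S) ≠ 0) :
    span K ((y ᵥ* ·) '' A) = ⊤ :=
  top_le_iff.1 <| (span_pair_eq_top_of_wedge_ne_zero h).symm.trans_le <| span_mono <|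
    Set.insert_subset ⟨1, hone, vecMul_one y⟩ (Set.singleton_subset_iff.2 ⟨S, hS, rfl⟩)

theorem wedge_vecCons_mulVec (S : Matrix (Fin 2) (Fin 2) K) (α : K) :
    wedge ![-α, 1] (S *ᵥ ![-α, 1]) = S 1 0 * α ^ 2 + (S 0 0 - S 1 1) * α - S 0 1 := by
  simp only [wedge, mulVec, dotProduct, Fin.sum_univ_two, cons_val_zero, cons_val_one,
    cons_val_fin_one]
  ring

theorem wedge_vecCons_vecMul (S : Matrix (Fin 2) (Fin 2) K) (α : K) :
    wedge ![1, α] (![1, α] ᵥ* S) = -(S 1 0 * α ^ 2 + (S 0 0 - S 1 1) * α - S 0 1) := by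
  simp only [wedge, vecMul, dotProduct, Fin.sum_univ_two, cons_val_zero, cons_val_one,
    cons_val_fin_one]
  ring

def wedgeMulVec (x : Fin 2 → K) : Matrix (Fin 2) (Fin 2) K →ₗ[K] K where
  toFun S := wedge x (S *ᵥ x)
  map_add' S T := by simp only [wedge, add_mulVec, Pi.add_apply]; ring
  map_smul' c S := by
    simp only [wedge, smul_mulVec, Pi.smul_apply, smul_eq_mul, RingHom.id_apply]
    ring

theorem exists_wedge_mulVec_ne_zero_of_span_eq_top {G : Set (Matrix (Fin 2) (Fin 2) K)}
    (hG : span K G = ⊤) {x : Fin 2 → K} (hx : x ≠ 0) : ∃ S ∈ G, wedge x (S *ᵥ x) ≠ 0 := by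
  by_contra! h
  have hker : span K G ≤ LinearMap.ker (wedgeMulVec x) := span_le.2 h
  rw [hG, top_le_iff, LinearMap.ker_eq_top] at hker
  have hx0 : x 0 = 0 := by
    simpa [wedgeMulVec, wedge, mulVec, dotProduct] using LinearMap.congr_fun hker (single 1 0 1)
  have hx1 : x 1 = 0 := by
    simpa [wedgeMulVec, wedge, mulVec, dotProduct] using LinearMap.congr_fun hker (single 0 1 1)
  exact hx (funext fun i => by fin_cases i <;> assumption)

theorem one_mem_of_isUnit {A : Submodule K (Matrix (Fin 2) (Fin 2) K)}
    (hmul : ∀ a ∈ A, ∀ b ∈ A, a * b ∈ A) {B : Matrix (Fin 2) (Fin 2) K} (hB : B ∈ A)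
    (hBunit : IsUnit B) : 1 ∈ A := by
  have hdet : B.det ≠ 0 := ((isUnit_iff_isUnit_det B).1 hBunit).ne_zero
  have cayleyHamilton : B ^ 2 = B.trace • B - B.det • 1 := by
    have h := aeval_self_charpoly B
    simp only [charpoly_fin_two, map_add, map_sub, map_mul, map_pow, aeval_X, aeval_C,
      Algebra.algebraMap_eq_smul_one, smul_mul_assoc, one_mul] at h
    rw [← sub_eq_zero, ← h]
    abel
  have : (1 : Matrix (Fin 2) (Fin 2) K) = B.det⁻¹ • (B.trace • B - B * B) := by
    rw [← sq, cayleyHamilton, sub_sub_cancel, inv_smul_smul₀ hdet]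
  exact this ▸ smul_mem _ _ (sub_mem (smul_mem _ _ hB) (hmul _ hB _ hB))

theorem exists_vecMulVec_mem [IsAlgClosed K] {A : Submodule K (Matrix (Fin 2) (Fin 2) K)}
    (hone : 1 ∈ A) {B : Matrix (Fin 2) (Fin 2) K} (hB : B ∈ A) (hB10 : B 1 0 ≠ 0) :
    ∃ β γ : K, vecMulVec ![-β, 1] ![1, γ] ∈ A := by
  obtain ⟨β, hβ⟩ := IsAlgClosed.exists_root
    (C (B 1 0) * X ^ 2 + C (B 0 0 - B 1 1) * X + C (-B 0 1)) (by rw [degree_quadratic hB10]; decide)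
  have hB01 : B 0 1 = B 1 0 * β ^ 2 + (B 0 0 - B 1 1) * β := by
    simp only [IsRoot, eval_add, eval_mul, eval_C, eval_pow, eval_X] at hβ
    linear_combination -hβ
  -- `B 0 0 + β * B 1 0` is the eigenvalue of `B` not belonging to the eigenvector `![-β, 1]`.
  refine ⟨β, (B 1 1 - B 0 0) / B 1 0 - β, ?_⟩
  have : vecMulVec ![-β, 1] ![1, (B 1 1 - B 0 0) / B 1 0 - β] =
      (B 1 0)⁻¹ • (B - (B 0 0 + β * B 1 0) • 1) := by
    ext i j
    fin_cases i <;> fin_cases j <;>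
      simp only [Fin.zero_eta, Fin.mk_one, vecMulVec, of_apply, cons_val_zero, cons_val_one,
        cons_val_fin_one, Matrix.smul_apply, Matrix.sub_apply, one_apply_eq, one_apply_ne,
        smul_eq_mul, hB01, ne_eq, zero_ne_one, one_ne_zero, not_false_eq_true] <;>
      field_simp <;> ring
  exact this ▸ smul_mem _ _ (sub_mem hB (smul_mem _ _ hone))

theorem span_eq_top_of_exists_quadratic_ne_zero [IsAlgClosed K] {G : Set (Matrix (Fin 2) (Fin 2) K)}
    (hmul : ∀ a ∈ G, ∀ b ∈ G, a * b ∈ G) (hone : 1 ∈ span K G) {B : Matrix (Fin 2) (Fin 2) K}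
    (hB : B ∈ G) (hB10 : B 1 0 ≠ 0)
    (hroot : ∀ α, ∃ S ∈ G, S 1 0 * α ^ 2 + (S 0 0 - S 1 1) * α - S 0 1 ≠ 0) :
    span K G = ⊤ := by
  obtain ⟨β, γ, hβγ⟩ := exists_vecMulVec_mem hone (subset_span hB) hB10
  obtain ⟨S, hSG, hS⟩ := hroot β
  obtain ⟨T, hTG, hT⟩ := hroot γ
  refine eq_top_of_vecMulVec_mem (fun _ ha _ hb => mul_mem_span_of_mul_mem hmul ha hb) hβγ
    (span_mulVec_eq_top hone (subset_span hSG) ?_) (span_vecMul_eq_top hone (subset_span hTG) ?_)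
  · rwa [wedge_vecCons_mulVec]
  · rwa [wedge_vecCons_vecMul, neg_ne_zero]

end FinTwo

/-- For a sub-semigroup `G` of `GL₂(ℂ)` (realized as a set of invertible
2×2 matrices closed under multiplication), the ℂ-span of `G` is all of `M₂(ℂ)` iff
`⋂_{S ∈ G} 𝔄_S = ∅` and some `B ∈ G` has `B 1 0 ≠ 0`. -/
theorem stmt0 (G : Set (Matrix (Fin 2) (Fin 2) ℂ))
    (hGunit : ∀ A ∈ G, IsUnit A)
    (hGmul : ∀ A ∈ G, ∀ B ∈ G, A * B ∈ G) :
    Submodule.span ℂ G = ⊤ ↔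
      ((⋂ S ∈ G, {α : ℂ | S 1 0 * α ^ 2 + (S 0 0 - S 1 1) * α - S 0 1 = 0}) = ∅ ∧
        ∃ B ∈ G, B 1 0 ≠ 0) := by
  simp only [Set.eq_empty_iff_forall_notMem, Set.mem_iInter₂, Set.mem_ofPred_eq, not_forall,
    exists_prop]
  constructor
  · intro hspan
    refine ⟨fun α => ?_, ?_⟩
    · simpa only [wedge_vecCons_mulVec] using
        exists_wedge_mulVec_ne_zero_of_span_eq_top hspan (x := ![-α, 1]) (by simp)
    · simpa [wedge, mulVec, dotProduct] using
        exists_wedge_mulVec_ne_zero_of_span_eq_top hspan (x := ![1, 0]) (by simp)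
  · rintro ⟨hroot, B, hB, hB10⟩
    exact span_eq_top_of_exists_quadratic_ne_zero hGmul
      (one_mem_of_isUnit (fun _ ha _ hb => mul_mem_span_of_mul_mem hGmul ha hb) (subset_span hB)
        (hGunit B hB)) hB hB10 hroot
end

section
/- Let Ω ⊆ ℂ be an open neighborhood of 0 and Φ(z) = Σ_{n≥0} c_n zⁿ a holomorphic function such that k(z, w) := Φ(z̄·w) defines a positive definite kernel on Ω. Then c_n ≥ 0 for all n ≥ 0. -/
/-!
Test positive definiteness of the kernel on the `m = n + 1` points `ε ζᵏ`, `ζ` a primitive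
`m`-th root of unity, with weights `ζ^(-kn)`. Orthogonality of the characters of `ℤ/m` turns the
quadratic form into `m² ∑_{l ≡ n (mod m)} c_l ε^(2l) ≥ 0`, whose lowest term is `c_n ε^(2n)`
because `n < m`. Dividing by `ε^(2n)` and letting `ε → 0` puts `c_n` in the closed cone of nonnegative
reals.
-/

open ComplexConjugate Finset Filter Topology
open scoped ComplexOrder

/-- A function `k : ℂ → ℂ → ℂ` is a positive definite kernel on `Ω` if every finite
matrix `(k (p i) (p j))` with points in `Ω` is Hermitian positive semidefinite. -/
def IsPosDefKernelOn (Ω : Set ℂ) (k : ℂ → ℂ → ℂ) : Prop :=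
  ∀ (n : ℕ) (p : Fin n → ℂ), (∀ i, p i ∈ Ω) → ∀ c : Fin n → ℂ,
    (∑ i, ∑ j, starRingEnd ℂ (c i) * k (p i) (p j) * c j).im = 0 ∧
    0 ≤ (∑ i, ∑ j, starRingEnd ℂ (c i) * k (p i) (p j) * c j).re

theorem IsPosDefKernelOn.sum_sum_nonneg {Ω : Set ℂ} {k : ℂ → ℂ → ℂ}
    (hk : IsPosDefKernelOn Ω k) {N : ℕ} {p : Fin N → ℂ} (hp : ∀ i, p i ∈ Ω) (v : Fin N → ℂ) :
    0 ≤ ∑ i, ∑ j, conj (v i) * k (p i) (p j) * v j :=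
  Complex.nonneg_iff.2 ⟨(hk N p hp v).2, (hk N p hp v).1.symm⟩

theorem sum_sum_conj_mul_tsum_mul_pow_mul {ι : Type*} [Fintype ι] (c : ℕ → ℂ) (p v : ι → ℂ)
    (hs : ∀ i j, Summable fun l => c l * (conj (p i) * p j) ^ l) :
    ∑ i, ∑ j, conj (v i) * (∑' l, c l * (conj (p i) * p j) ^ l) * v j =
      ∑' l, c l * (conj (∑ j, v j * p j ^ l) * ∑ j, v j * p j ^ l) := by
  have hterm : ∀ i j l, conj (v i) * (c l * (conj (p i) * p j) ^ l) * v j =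
      c l * (conj (v i * p i ^ l) * (v j * p j ^ l)) := by
    intro i j l
    simp only [map_mul, map_pow]
    ring
  have hs' : ∀ i j, Summable fun l => c l * (conj (v i * p i ^ l) * (v j * p j ^ l)) :=
    fun i j => (((hs i j).mul_left (conj (v i))).mul_right (v j)).congr (hterm i j)
  calc _ = ∑ i, ∑ j, ∑' l, c l * (conj (v i * p i ^ l) * (v j * p j ^ l)) := by
        refine sum_congr rfl fun i _ => sum_congr rfl fun j _ => ?_
        rw [← tsum_mul_left, ← tsum_mul_right]
        exact tsum_congr (hterm i j)
    _ = ∑' l, ∑ i, ∑ j, c l * (conj (v i * p i ^ l) * (v j * p j ^ l)) := by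
        rw [Summable.tsum_finsetSum fun i _ => summable_sum fun j _ => hs' i j]
        exact sum_congr rfl fun i _ => (Summable.tsum_finsetSum fun j _ => hs' i j).symm
    _ = _ := by
        simp_rw [map_sum, sum_mul_sum, mul_sum]

theorem IsPrimitiveRoot.sum_pow_mul_inv_pow {K : Type*} [Field K] {ζ : K} {m : ℕ}
    (hζ : IsPrimitiveRoot ζ m) (l n : ℕ) :
    ∑ k : Fin m, (ζ ^ (k : ℕ)) ^ l * ((ζ ^ (k : ℕ)) ^ n)⁻¹ =
      if n ≡ l [MOD m] then (m : K) else 0 := by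
  rcases eq_or_ne m 0 with rfl | hm
  · simp
  set d := ζ ^ l * (ζ ^ n)⁻¹
  have hd : ∀ k : ℕ, (ζ ^ k) ^ l * ((ζ ^ k) ^ n)⁻¹ = d ^ k := by
    intro k
    rw [mul_pow, inv_pow, ← pow_mul, ← pow_mul, ← pow_mul, ← pow_mul, mul_comm k l, mul_comm k n]
  rw [Fin.sum_univ_eq_sum_range (fun k => (ζ ^ k) ^ l * ((ζ ^ k) ^ n)⁻¹),
    sum_congr rfl fun k _ => hd k]
  have hd1 : d = 1 ↔ n ≡ l [MOD m] := by
    rw [show d = ζ ^ ((l : ℤ) - n) by rw [zpow_sub₀ (hζ.ne_zero hm), zpow_natCast, zpow_natCast,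
      div_eq_mul_inv], hζ.zpow_eq_one_iff_dvd, Nat.modEq_iff_dvd]
  split_ifs with h
  · simp [hd1.2 h]
  · have hdm : d ^ m = 1 := by
      rw [← hd, hζ.pow_eq_one, one_pow, one_pow, inv_one, mul_one]
    rw [geom_sum_eq (mt hd1.1 h), hdm, sub_self, zero_div]

section PowerSeries

variable {𝕜 : Type*} [RCLike 𝕜] {a : ℕ → 𝕜} {x₀ : 𝕜}

theorem tendsto_tsum_mul_pow_nhds_zero (hx₀ : x₀ ≠ 0) (ha : Summable fun l => a l * x₀ ^ l) :
    Tendsto (fun x => ∑' l, a l * x ^ l) (𝓝 0) (𝓝 (a 0)) := by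
  have h0 : a 0 = ∑' l, a l * (0 : 𝕜) ^ l := by
    rw [tsum_eq_single 0 fun l hl => by simp [hl]]
    simp
  rw [h0]
  refine tendsto_tsum_of_dominated_convergence ha.norm (fun l => ?_) ?_
  · exact (continuous_const.mul (continuous_pow l)).tendsto 0
  · filter_upwards [Metric.closedBall_mem_nhds (0 : 𝕜) (norm_pos_iff.2 hx₀)] with x hx l
    rw [norm_mul, norm_mul, norm_pow, norm_pow]
    gcongr
    simpa using hx

theorem tendsto_tsum_mul_pow_div_pow (hx₀ : x₀ ≠ 0) (ha : Summable fun l => a l * x₀ ^ l)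
    {n : ℕ} (hn : ∀ l < n, a l = 0) :
    Tendsto (fun x => (∑' l, a l * x ^ l) / x ^ n) (𝓝[≠] 0) (𝓝 (a n)) := by
  have hshift : Summable fun l => a (l + n) * x₀ ^ l := by
    refine (((summable_nat_add_iff n).2 ha).mul_right (x₀ ^ n)⁻¹).congr fun l => ?_
    rw [pow_add]
    field_simp
  have hdiv : ∀ x ≠ (0 : 𝕜), (∑' l, a l * x ^ l) / x ^ n = ∑' l, a (l + n) * x ^ l := by
    intro x hx
    rw [← (add_left_injective n).tsum_eq (f := fun l => a l * x ^ l)]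
    · simp_rw [pow_add, ← mul_assoc, tsum_mul_right]
      field_simp
    · intro l hl
      have : n ≤ l := by
        by_contra! h
        exact hl (by simp [hn l h])
      exact ⟨l - n, Nat.sub_add_cancel this⟩
  have hlim := (tendsto_tsum_mul_pow_nhds_zero hx₀ hshift).mono_left
    (nhdsWithin_le_nhds (s := {0}ᶜ))
  rw [zero_add] at hlim
  refine hlim.congr' ?_
  filter_upwards [self_mem_nhdsWithin] with x hx using (hdiv x hx).symm

end PowerSeries

theorem tendsto_ofReal_sq_nhdsGT_zero :
    Tendsto (fun ε : ℝ => (ε : ℂ) ^ 2) (𝓝[>] 0) (𝓝[≠] 0) := by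
  refine tendsto_nhdsWithin_iff.2 ⟨?_, ?_⟩
  · exact ((by fun_prop : Continuous fun ε : ℝ => (ε : ℂ) ^ 2).tendsto' 0 0 (by simp)).mono_left
      nhdsWithin_le_nhds
  · filter_upwards [self_mem_nhdsWithin] with ε hε
    exact pow_ne_zero 2 (Complex.ofReal_ne_zero.2 hε.ne')

theorem IsPosDefKernelOn.tsum_ite_modEq_mul_sq_pow_nonneg {Ω : Set ℂ} {c : ℕ → ℂ}
    (hconv : ∀ z ∈ Ω, ∀ w ∈ Ω, Summable fun l => c l * (conj z * w) ^ l)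
    (hpd : IsPosDefKernelOn Ω fun z w => ∑' l, c l * (conj z * w) ^ l)
    {m : ℕ} (hm : m ≠ 0) (n : ℕ) {ε : ℝ} (hε : 0 ≤ ε) (hsphere : Metric.sphere (0 : ℂ) ε ⊆ Ω) :
    0 ≤ ∑' l, (if n ≡ l [MOD m] then c l else 0) * ((ε : ℂ) ^ 2) ^ l := by
  obtain ⟨ζ, hζ⟩ : ∃ ζ : ℂ, IsPrimitiveRoot ζ m := ⟨_, Complex.isPrimitiveRoot_exp m hm⟩
  set p : Fin m → ℂ := fun k => ε * ζ ^ (k : ℕ)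
  have hp : ∀ k, p k ∈ Ω := fun k => hsphere (by simp [p, hζ.norm'_eq_one hm, abs_of_nonneg hε])
  have hform := hpd.sum_sum_nonneg hp fun k => ((ζ ^ (k : ℕ)) ^ n)⁻¹
  rw [sum_sum_conj_mul_tsum_mul_pow_mul c p _ fun i j => hconv _ (hp i) _ (hp j)] at hform
  have hterm : ∀ l, c l * (conj (∑ k : Fin m, ((ζ ^ (k : ℕ)) ^ n)⁻¹ * p k ^ l) *
      ∑ k : Fin m, ((ζ ^ (k : ℕ)) ^ n)⁻¹ * p k ^ l) =
      (m : ℂ) ^ 2 * ((if n ≡ l [MOD m] then c l else 0) * ((ε : ℂ) ^ 2) ^ l) := by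
    intro l
    have hsum : ∑ k : Fin m, ((ζ ^ (k : ℕ)) ^ n)⁻¹ * p k ^ l =
        (ε : ℂ) ^ l * if n ≡ l [MOD m] then (m : ℂ) else 0 := by
      rw [← hζ.sum_pow_mul_inv_pow, mul_sum]
      exact sum_congr rfl fun k _ => by simp only [p]; ring
    rw [hsum]
    split_ifs <;> simp [Complex.conj_ofReal]
    ring
  rw [tsum_congr hterm, tsum_mul_left] at hform
  have hm2 : (0 : ℂ) < (m : ℂ) ^ 2 := pow_pos (Nat.cast_pos.2 (Nat.pos_of_ne_zero hm)) 2
  exact le_of_mul_le_mul_left (by simpa using hform) hm2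

/-- If `Φ(z) = Σ cₙ zⁿ` is holomorphic near `0` and
`k(z,w) = Φ(z̄ · w)` is a positive definite kernel on an open neighborhood `Ω` of `0`,
then all the coefficients `cₙ` are nonnegative reals. -/
theorem stmt8 (Ω : Set ℂ) (hΩ : IsOpen Ω) (h0 : (0 : ℂ) ∈ Ω) (c : ℕ → ℂ)
    (hconv : ∀ z ∈ Ω, ∀ w ∈ Ω, Summable fun n => c n * (starRingEnd ℂ z * w) ^ n)
    (hpd : IsPosDefKernelOn Ω
      (fun z w => ∑' n, c n * (starRingEnd ℂ z * w) ^ n)) :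
    ∀ n, (c n).im = 0 ∧ 0 ≤ (c n).re := by
  intro n
  obtain ⟨ε₀, hε₀, hball⟩ := Metric.isOpen_iff.1 hΩ 0 h0
  set a : ℕ → ℂ := fun l => if n ≡ l [MOD n + 1] then c l else 0
  have hsphere : ∀ ε ∈ Set.Ioo 0 ε₀, Metric.sphere (0 : ℂ) ε ⊆ Ω := fun ε hε =>
    (Metric.sphere_subset_ball hε.2).trans hball
  have ha : Summable fun l => a l * (((ε₀ / 2 : ℝ) : ℂ) ^ 2) ^ l := by
    have hmem : ((ε₀ / 2 : ℝ) : ℂ) ∈ Ω :=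
      hsphere (ε₀ / 2) ⟨by positivity, by linarith⟩ (by simp [abs_of_pos hε₀])
    refine Summable.of_norm_bounded (hconv _ hmem _ hmem).norm fun l => ?_
    simp only [a, Complex.conj_ofReal, ← sq]
    split_ifs <;> simp
    positivity
  have hlow : ∀ l < n, a l = 0 := fun l hl =>
    if_neg fun h => hl.ne' (h.eq_of_lt_of_lt n.lt_succ_self (by omega))
  have hlim := (tendsto_tsum_mul_pow_div_pow (by simp [hε₀.ne']) ha hlow).comp
    tendsto_ofReal_sq_nhdsGT_zero
  have hnonneg : ∀ᶠ ε : ℝ in 𝓝[>] 0, 0 ≤ (∑' l, a l * ((ε : ℂ) ^ 2) ^ l) / ((ε : ℂ) ^ 2) ^ n := by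
    filter_upwards [Ioo_mem_nhdsGT hε₀] with ε hε
    refine div_nonneg (hpd.tsum_ite_modEq_mul_sq_pow_nonneg hconv n.succ_ne_zero n hε.1.le
      (hsphere ε hε)) ?_
    exact_mod_cast pow_nonneg (sq_nonneg ε) n
  have hcn : 0 ≤ c n := by simpa [a, Nat.ModEq.refl] using ge_of_tendsto hlim hnonneg
  exact ⟨(Complex.nonneg_iff.1 hcn).2.symm, (Complex.nonneg_iff.1 hcn).1⟩
end

section
/- Let p ∈ U ⊆ ℝ^d with U open, F : U → ℝ^r a smooth map, and h : ℝ^r → ℂ a smooth function. Then for indices i_1, …, i_n ∈ {1,…,d}, the partial derivative ∂_{x_{i_1}}⋯∂_{x_{i_n}}(h∘F)(p) equals [(∏_{j=1}^n Σ_{m=1}^r (∂F^m/∂x_{i_j})(p)·∂_{x_m}) h](F(p)) plus a term (D_n(p) h)(F(p)) where D_n : U → 𝒟_{n−1}(ℝ^r) is a smooth map into the (finite-dimensional) space of differential operators of order at most n−1 with constant coefficients, depending only on F and the indices (not on h). -/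
/-- The partial derivative `∂_{x_m}` acting on complex-valued functions on `ℝ^k`. -/
noncomputable def pd {k : ℕ} (m : Fin k) (g : (Fin k → ℝ) → ℂ) :
    (Fin k → ℝ) → ℂ :=
  fun x => fderiv ℝ g x (Pi.single m 1)

/-- Iterated partial derivative `∂_{x_{i_1}} ⋯ ∂_{x_{i_n}}` along a sequence of
indices. -/
noncomputable def pdSeq {k n : ℕ} (i : Fin n → Fin k) (g : (Fin k → ℝ) → ℂ) :
    (Fin k → ℝ) → ℂ :=
  (List.ofFn i).foldr (fun m g => pd m g) g

/-- Iterated partial derivative `∂_x^a` for a multi-index `a`. -/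
noncomputable def pdMulti {k : ℕ} (a : Fin k → ℕ) (g : (Fin k → ℝ) → ℂ) :
    (Fin k → ℝ) → ℂ :=
  (List.finRange k).foldr (fun m g => (pd m)^[a m] g) g

/-- The partial derivative `∂F^m/∂x_j` of the `m`-th component of `F` at `p`. -/
noncomputable def partialComp {d r : ℕ} (F : (Fin d → ℝ) → (Fin r → ℝ))
    (j : Fin d) (m : Fin r) (p : Fin d → ℝ) : ℝ :=
  fderiv ℝ (fun y => F y m) p (Pi.single j 1)

private lemma pd_contDiff {k : ℕ} {g} (hg : ContDiff ℝ (⊤ : ℕ∞) g) (m : Fin k) :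
    ContDiff ℝ (⊤ : ℕ∞) (pd m g) :=
  (hg.fderiv_right (by simp)).clm_apply contDiff_const

private lemma pdL_contDiff {k : ℕ} : ∀ (l : List (Fin k)) {g}, ContDiff ℝ (⊤ : ℕ∞) g →
    ContDiff ℝ (⊤ : ℕ∞) (l.foldr pd g)
  | [], _, hg => hg
  | _ :: l, _, hg => pd_contDiff (pdL_contDiff l hg) _

private lemma pd_congr_nhds {k : ℕ} {g₁ g₂ : (Fin k → ℝ) → ℂ} {x}
    (h : g₁ =ᶠ[nhds x] g₂) (m : Fin k) : pd m g₁ x = pd m g₂ x := by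
  simp only [pd]; rw [h.fderiv_eq]

private lemma pd_comm {k : ℕ} {g : (Fin k → ℝ) → ℂ} (hg : ContDiff ℝ (⊤ : ℕ∞) g) (m m' : Fin k) :
    pd m (pd m' g) = pd m' (pd m g) := by
  have hd : ContDiff ℝ (⊤ : ℕ∞) (fderiv ℝ g) := hg.fderiv_right (by simp)
  have key : ∀ (v w : Fin k → ℝ) (x : Fin k → ℝ),
      fderiv ℝ (fun y => fderiv ℝ g y v) x w = fderiv ℝ (fderiv ℝ g) x w v := by
    intro v w x
    rw [fderiv_clm_apply (hd.differentiable (by simp) x) (differentiableAt_const v)]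
    simp
  funext x
  have hs : IsSymmSndFDerivAt ℝ g x := hg.contDiffAt.isSymmSndFDerivAt (by rw [minSmoothness_of_isRCLikeNormedField]; exact WithTop.coe_le_coe.2 le_top)
  simp only [pd]
  calc fderiv ℝ (fun y => fderiv ℝ g y (Pi.single m' 1)) x (Pi.single m 1)
      = fderiv ℝ (fderiv ℝ g) x (Pi.single m 1) (Pi.single m' 1) := key _ _ x
    _ = fderiv ℝ (fderiv ℝ g) x (Pi.single m' 1) (Pi.single m 1) := hs _ _
    _ = fderiv ℝ (fun y => fderiv ℝ g y (Pi.single m 1)) x (Pi.single m' 1) := (key _ _ x).symm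

private lemma pdL_perm {k : ℕ} {g} (hg : ContDiff ℝ (⊤ : ℕ∞) g) {l l' : List (Fin k)}
    (hp : l.Perm l') : l.foldr pd g = l'.foldr pd g := by
  induction hp with
  | nil => rfl
  | cons a _ ih => simp only [List.foldr_cons, ih]
  | swap a b l =>
    simp only [List.foldr_cons]
    rw [pd_comm (pdL_contDiff l hg)]
  | trans _ _ ih1 ih2 => rw [ih1, ih2]

private lemma pd_iterate {k : ℕ} (m : Fin k) (t : ℕ) (g) :
    (pd m)^[t] g = (List.replicate t m).foldr pd g := by
  induction t with
  | zero => rfl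
  | succ t ih => rw [Function.iterate_succ_apply', ih, List.replicate_succ, List.foldr_cons]

private def canonList {k : ℕ} (a : Fin k → ℕ) : List (Fin k) :=
  (List.finRange k).flatMap fun m => List.replicate (a m) m

private lemma pdMulti_eq_canon {k : ℕ} (a : Fin k → ℕ) (g) :
    pdMulti a g = (canonList a).foldr pd g := by
  unfold pdMulti canonList
  generalize List.finRange k = L
  induction L with
  | nil => rfl
  | cons m L ih =>
    rw [List.foldr_cons, ih, List.flatMap_cons, List.foldr_append, pd_iterate]

private lemma count_canonList {k : ℕ} (a : Fin k → ℕ) (m : Fin k) :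
    (canonList a).count m = a m := by
  unfold canonList
  rw [List.count_flatMap]
  rw [show (List.map (List.count m ∘ fun m' => List.replicate (a m') m') (List.finRange k))
      = List.map (fun m' => if m' = m then a m' else 0) (List.finRange k) from
    List.map_congr_left fun m' _ => by simp [List.count_replicate]]
  rw [← Fin.sum_univ_def]
  simp

private lemma pdL_eq_pdMulti {k : ℕ} {g} (hg : ContDiff ℝ (⊤ : ℕ∞) g) (l : List (Fin k)) :
    l.foldr pd g = pdMulti (fun m => l.count m) g := by
  rw [pdMulti_eq_canon]
  exact pdL_perm hg (List.perm_iff_count.2 fun m => by rw [count_canonList])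

private lemma sum_count_eq_length {k : ℕ} (l : List (Fin k)) :
    ∑ m, l.count m = l.length := by
  induction l with
  | nil => simp
  | cons a l ih => simp [List.count_cons, Finset.sum_add_distrib, ih]

private lemma pd_add {k : ℕ} {φ ψ : (Fin k → ℝ) → ℂ} {x} (hφ : DifferentiableAt ℝ φ x)
    (hψ : DifferentiableAt ℝ ψ x) (m : Fin k) :
    pd m (fun y => φ y + ψ y) x = pd m φ x + pd m ψ x := by
  simp only [pd]; rw [fderiv_fun_add hφ hψ]; simp

private lemma diff_list_sum {k : ℕ} {α : Type*} (G : α → (Fin k → ℝ) → ℂ) {x} :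
    ∀ (P : List α), (∀ q ∈ P, DifferentiableAt ℝ (G q) x) →
      DifferentiableAt ℝ (fun y => (P.map fun q => G q y).sum) x
  | [], _ => by simpa using differentiableAt_const (0 : ℂ)
  | q :: P, hd => by
    simp only [List.map_cons, List.sum_cons]
    exact (hd q (by simp)).add (diff_list_sum G P fun q hq => hd q (by simp [hq]))

private lemma pd_list_sum {k : ℕ} {α : Type*} (G : α → (Fin k → ℝ) → ℂ) {x} :
    ∀ (P : List α), (∀ q ∈ P, DifferentiableAt ℝ (G q) x) → ∀ m : Fin k,
      pd m (fun y => (P.map fun q => G q y).sum) x = (P.map fun q => pd m (G q) x).sum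
  | [], _, m => by simp [pd]
  | q :: P, hd, m => by
    simp only [List.map_cons, List.sum_cons]
    rw [pd_add (hd q (by simp)) (diff_list_sum G P fun q hq => hd q (by simp [hq])),
      pd_list_sum G P (fun q hq => hd q (by simp [hq])) m]

private lemma pd_sum {k : ℕ} {ι : Type*} [Fintype ι] (G : ι → (Fin k → ℝ) → ℂ) {x}
    (hG : ∀ t, DifferentiableAt ℝ (G t) x) (m : Fin k) :
    pd m (fun y => ∑ t, G t y) x = ∑ t, pd m (G t) x := by
  simp only [pd]
  rw [fderiv_fun_sum fun t _ => hG t]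
  simp

private lemma pd_mul {k : ℕ} {φ ψ : (Fin k → ℝ) → ℂ} {x} (hφ : DifferentiableAt ℝ φ x)
    (hψ : DifferentiableAt ℝ ψ x) (m : Fin k) :
    pd m (fun y => φ y * ψ y) x = pd m φ x * ψ x + φ x * pd m ψ x := by
  simp only [pd]; rw [fderiv_fun_mul hφ hψ]
  simp only [ContinuousLinearMap.add_apply, ContinuousLinearMap.smul_apply, smul_eq_mul]
  ring

private lemma pd_const_mul {k : ℕ} {ψ : (Fin k → ℝ) → ℂ} {x} (hψ : DifferentiableAt ℝ ψ x)
    (C : ℂ) (m : Fin k) :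
    pd m (fun y => C * ψ y) x = C * pd m ψ x := by
  simp only [pd]; rw [fderiv_const_mul hψ]; simp

private lemma pd_comp {d r : ℕ} {F : (Fin d → ℝ) → Fin r → ℝ} {x}
    (hF : DifferentiableAt ℝ F x) {h : (Fin r → ℝ) → ℂ}
    (hh : DifferentiableAt ℝ h (F x)) (j : Fin d) :
    pd j (fun y => h (F y)) x = ∑ m, (partialComp F j m x : ℂ) * pd m h (F x) := by
  have hcomp : fderiv ℝ (fun y => h (F y)) x = (fderiv ℝ h (F x)).comp (fderiv ℝ F x) :=
    fderiv_comp x hh hF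
  have hvm : ∀ m : Fin r, fderiv ℝ F x (Pi.single j 1) m = partialComp F j m x := by
    intro m
    have h2 : fderiv ℝ (fun y => F y m) x
        = (ContinuousLinearMap.proj (R := ℝ) (φ := fun _ : Fin r => ℝ) m).comp
            (fderiv ℝ F x) := by
      have h3 := fderiv_comp (𝕜 := ℝ) x
        (ContinuousLinearMap.proj (R := ℝ) (φ := fun _ : Fin r => ℝ) m).differentiableAt hF
      rw [ContinuousLinearMap.fderiv] at h3
      exact h3
    unfold partialComp
    rw [h2]; rfl
  have expand : ∀ v : Fin r → ℝ, fderiv ℝ h (F x) v = ∑ m, (v m : ℂ) * pd m h (F x) := by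
    intro v
    have hv : v = ∑ m, v m • (Pi.single m 1 : Fin r → ℝ) := by
      conv_lhs => rw [← Finset.univ_sum_single v]
      refine Finset.sum_congr rfl fun m _ => ?_
      funext l
      by_cases hl : l = m <;> simp [hl, Pi.single_apply]
    conv_lhs => rw [hv]
    rw [map_sum]
    refine Finset.sum_congr rfl fun m _ => ?_
    rw [map_smul, Complex.real_smul]
    rfl
  calc pd j (fun y => h (F y)) x
      = fderiv ℝ h (F x) (fderiv ℝ F x (Pi.single j 1)) := by
        simp only [pd]; rw [hcomp]; rfl
    _ = ∑ m, ((fderiv ℝ F x (Pi.single j 1)) m : ℂ) * pd m h (F x) := expand _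
    _ = ∑ m, (partialComp F j m x : ℂ) * pd m h (F x) :=
        Finset.sum_congr rfl fun m _ => by rw [hvm]

private lemma pd_contDiffOn {k : ℕ} {U : Set (Fin k → ℝ)} (hU : IsOpen U) {g}
    (hg : ContDiffOn ℝ (⊤ : ℕ∞) g U) (m : Fin k) : ContDiffOn ℝ (⊤ : ℕ∞) (pd m g) U := by
  have h1 : ContDiffOn ℝ (⊤ : ℕ∞) (fderivWithin ℝ g U) U := hg.fderivWithin hU.uniqueDiffOn (by simp)
  exact (h1.clm_apply contDiffOn_const).congr fun x hx => by
    simp only [pd]; rw [fderivWithin_of_isOpen hU hx]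

private lemma partialComp_contDiffOn {d r : ℕ} {U : Set (Fin d → ℝ)} (hU : IsOpen U)
    {F : (Fin d → ℝ) → Fin r → ℝ} (hF : ContDiffOn ℝ (⊤ : ℕ∞) F U) (j : Fin d) (m : Fin r) :
    ContDiffOn ℝ (⊤ : ℕ∞) (fun x => (partialComp F j m x : ℂ)) U := by
  have hFm : ContDiffOn ℝ (⊤ : ℕ∞) (fun y => F y m) U :=
    (ContinuousLinearMap.proj (R := ℝ) (φ := fun _ : Fin r => ℝ) m).contDiff.comp_contDiffOn hF
  have h1 : ContDiffOn ℝ (⊤ : ℕ∞) (partialComp F j m) U :=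
    ((hFm.fderivWithin hU.uniqueDiffOn (by simp)).clm_apply contDiffOn_const).congr fun x hx => by
      unfold partialComp; rw [fderivWithin_of_isOpen hU hx]
  exact Complex.ofRealCLM.contDiff.comp_contDiffOn h1

private lemma contDiffOn_list_sum {k : ℕ} {α : Type*} {U : Set (Fin k → ℝ)}
    (g : α → (Fin k → ℝ) → ℂ) :
    ∀ (P : List α), (∀ q ∈ P, ContDiffOn ℝ (⊤ : ℕ∞) (g q) U) →
      ContDiffOn ℝ (⊤ : ℕ∞) (fun x => (P.map fun q => g q x).sum) U
  | [], _ => by simpa using contDiffOn_const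
  | q :: P, hP => by
    simp only [List.map_cons, List.sum_cons]
    exact (hP q (by simp)).add (contDiffOn_list_sum g P fun q hq => hP q (by simp [hq]))

private lemma contDiffOn_finset_prod {k : ℕ} {ι : Type*} {U : Set (Fin k → ℝ)}
    (c : ι → (Fin k → ℝ) → ℂ) (s : Finset ι)
    (hc : ∀ j ∈ s, ContDiffOn ℝ (⊤ : ℕ∞) (c j) U) :
    ContDiffOn ℝ (⊤ : ℕ∞) (fun x => ∏ j ∈ s, c j x) U := by
  classical
  revert hc
  refine Finset.induction_on s ?_ ?_
  · intro _; simpa using contDiffOn_const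
  · intro a s ha ih hc
    simp only [Finset.prod_insert ha]
    exact (hc _ (by simp)).mul (ih fun j hj => hc j (by simp [hj]))

private lemma list_sum_map_add {α : Type*} (f g : α → ℂ) :
    ∀ l : List α, (l.map fun a => f a + g a).sum = (l.map f).sum + (l.map g).sum
  | [] => by simp
  | a :: l => by simp [list_sum_map_add f g l]; ring

private lemma list_sum_flatMap {α : Type*} (f : α → List ℂ) :
    ∀ l : List α, (l.flatMap f).sum = (l.map fun a => (f a).sum).sum
  | [] => by simp
  | a :: l => by simp [List.flatMap_cons, list_sum_flatMap f l]

private lemma pdSeq_succ {k n : ℕ} (i : Fin (n+1) → Fin k) (g) :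
    pdSeq i g = pd (i 0) (pdSeq (fun j => i j.succ) g) := by
  unfold pdSeq; rw [List.ofFn_succ]; rfl

private lemma pdSeq_cons {r n : ℕ} (m : Fin r) (f : Fin n → Fin r) (g) :
    pdSeq (Fin.cons m f) g = pd m (pdSeq f g) := by
  rw [pdSeq_succ]
  simp [Fin.cons_zero, Fin.cons_succ]

private lemma pdSeq_contDiff {k n : ℕ} (f : Fin n → Fin k) {g} (hg : ContDiff ℝ (⊤ : ℕ∞) g) :
    ContDiff ℝ (⊤ : ℕ∞) (pdSeq f g) := pdL_contDiff _ hg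

private lemma opExpand {k r : ℕ} (cc : Fin k → Fin r → ℂ) {h : (Fin r → ℝ) → ℂ}
    (hh : ContDiff ℝ (⊤ : ℕ∞) h) :
    ∀ (n : ℕ) (i : Fin n → Fin k),
      (List.ofFn i).foldr (fun ij g => fun y => ∑ m, cc ij m * pd m g y) h
        = fun y => ∑ f : Fin n → Fin r, (∏ j, cc (i j) (f j)) * pdSeq f h y
  | 0, i => by
    funext y
    simp [List.ofFn_zero, pdSeq]
  | (n+1), i => by
    rw [List.ofFn_succ]
    simp only [List.foldr_cons]
    rw [opExpand cc hh n (fun j => i j.succ)]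
    funext y
    have hdiff : ∀ f : Fin n → Fin r, DifferentiableAt ℝ (pdSeq f h) y :=
      fun f => ((pdSeq_contDiff f hh).differentiable (by simp)) y
    have hpd : ∀ m : Fin r,
        pd m (fun z => ∑ f : Fin n → Fin r, (∏ j, cc (i j.succ) (f j)) * pdSeq f h z) y
          = ∑ f : Fin n → Fin r, (∏ j, cc (i j.succ) (f j)) * pd m (pdSeq f h) y := by
      intro m
      rw [pd_sum (fun f z => (∏ j, cc (i j.succ) (f j)) * pdSeq f h z)
        (fun f => (hdiff f).const_mul _) m]
      exact Finset.sum_congr rfl fun f _ => pd_const_mul (hdiff f) _ m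
    simp only [hpd]
    rw [← (Fin.consEquiv fun _ => Fin r).sum_comp
      (fun f : Fin (n+1) → Fin r => (∏ j, cc (i j) (f j)) * pdSeq f h y),
      Fintype.sum_prod_type]
    refine Finset.sum_congr rfl fun m _ => ?_
    rw [Finset.mul_sum]
    refine Finset.sum_congr rfl fun f _ => ?_
    rw [show ((Fin.consEquiv fun _ => Fin r) (m, f) : Fin (n+1) → Fin r) = Fin.cons m f from rfl]
    rw [Fin.prod_univ_succ]
    simp only [Fin.cons_zero, Fin.cons_succ, pdSeq_cons]
    ring

private lemma mainExpand {d r : ℕ} {U : Set (Fin d → ℝ)} (hU : IsOpen U)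
    {F : (Fin d → ℝ) → (Fin r → ℝ)} (hF : ContDiffOn ℝ (⊤ : ℕ∞) F U) :
    ∀ (n : ℕ) (i : Fin n → Fin d),
      ∃ L : List (((Fin d → ℝ) → ℂ) × List (Fin r)),
        (∀ q ∈ L, q.2.length < n ∧ ContDiffOn ℝ (⊤ : ℕ∞) q.1 U) ∧
        ∀ (h : (Fin r → ℝ) → ℂ), ContDiff ℝ (⊤ : ℕ∞) h → ∀ x ∈ U,
          pdSeq i (fun y => h (F y)) x
            = (∑ f : Fin n → Fin r,
                (∏ j, (partialComp F (i j) (f j) x : ℂ)) * pdSeq f h (F x))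
              + (L.map fun q => q.1 x * (q.2.foldr pd h) (F x)).sum
  | 0, i => by
    refine ⟨[], by simp, fun h hh x hx => ?_⟩
    simp [pdSeq, List.ofFn_zero]
  | (n+1), i => by
    obtain ⟨L, hL, hEq⟩ := mainExpand hU hF n (fun j => i j.succ)
    set PC : (Fin n → Fin r) → (Fin d → ℝ) → ℂ :=
      fun f x => ∏ j, (partialComp F (i j.succ) (f j) x : ℂ) with hPC
    have hPCc : ∀ f, ContDiffOn ℝ (⊤ : ℕ∞) (PC f) U := fun f =>
      contDiffOn_finset_prod _ _ fun j _ => partialComp_contDiffOn hU hF _ _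
    refine ⟨((Finset.univ : Finset (Fin n → Fin r)).toList.map
        fun f => (pd (i 0) (PC f), List.ofFn f))
      ++ (L.map fun q => (pd (i 0) q.1, q.2))
      ++ (L.flatMap fun q => (Finset.univ : Finset (Fin r)).toList.map
          fun m => ((fun x => q.1 x * (partialComp F (i 0) m x : ℂ)), m :: q.2)),
      ?_, ?_⟩
    · intro q hq
      simp only [List.mem_append, List.mem_map, List.mem_flatMap] at hq
      rcases hq with (⟨f, _, rfl⟩ | ⟨q', hq', rfl⟩) | ⟨q', hq', hq2⟩
      · refine ⟨by rw [List.length_ofFn]; omega, ?_⟩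
        exact pd_contDiffOn hU (hPCc f) _
      · exact ⟨Nat.lt_succ_of_lt (hL q' hq').1, pd_contDiffOn hU (hL q' hq').2 _⟩
      · obtain ⟨m, _, rfl⟩ := hq2
        refine ⟨?_, (hL q' hq').2.mul (partialComp_contDiffOn hU hF (i 0) m)⟩
        have := (hL q' hq').1
        simp only [List.length_cons]
        omega
    · intro h hh x hx
      have hFx : DifferentiableAt ℝ F x :=
        (hF.differentiableOn (by simp)).differentiableAt (hU.mem_nhds hx)
      have dOn : ∀ {φ : (Fin d → ℝ) → ℂ}, ContDiffOn ℝ (⊤ : ℕ∞) φ U → DifferentiableAt ℝ φ x :=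
        fun hφ => (hφ.differentiableOn (by simp)).differentiableAt (hU.mem_nhds hx)
      have hCompD : ∀ (l : List (Fin r)),
          DifferentiableAt ℝ (fun z => (l.foldr pd h) (F z)) x :=
        fun l => DifferentiableAt.comp x
          (((pdL_contDiff l hh).differentiable (by simp)) (F x)) hFx
      have hSeqCompD : ∀ (f : Fin n → Fin r),
          DifferentiableAt ℝ (fun z => pdSeq f h (F z)) x :=
        fun f => DifferentiableAt.comp x
          (((pdSeq_contDiff f hh).differentiable (by simp)) (F x)) hFx
      rw [pdSeq_succ]
      have heq : pdSeq (fun j => i j.succ) (fun y => h (F y)) =ᶠ[nhds x]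
          fun z => (∑ f : Fin n → Fin r, PC f z * pdSeq f h (F z))
            + (L.map fun q => q.1 z * (q.2.foldr pd h) (F z)).sum := by
        filter_upwards [hU.mem_nhds hx] with z hz using hEq h hh z hz
      rw [pd_congr_nhds heq]
      have dTop : DifferentiableAt ℝ
          (fun z => ∑ f : Fin n → Fin r, PC f z * pdSeq f h (F z)) x := by
        apply DifferentiableAt.fun_sum
        intro f _
        exact (dOn (hPCc f)).mul (hSeqCompD f)
      have dLow : DifferentiableAt ℝ
          (fun z => (L.map fun q => q.1 z * (q.2.foldr pd h) (F z)).sum) x :=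
        diff_list_sum (fun q z => q.1 z * (q.2.foldr pd h) (F z)) L
          (fun q hq => (dOn (hL q hq).2).mul (hCompD q.2))
      rw [pd_add dTop dLow]
      rw [pd_sum (fun f z => PC f z * pdSeq f h (F z))
        (fun f => (dOn (hPCc f)).mul (hSeqCompD f))]
      rw [pd_list_sum (fun q z => q.1 z * (q.2.foldr pd h) (F z)) L
        (fun q hq => (dOn (hL q hq).2).mul (hCompD q.2))]
      have eTop : ∀ f : Fin n → Fin r,
          pd (i 0) (fun z => PC f z * pdSeq f h (F z)) x
            = pd (i 0) (PC f) x * pdSeq f h (F x)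
              + ∑ m, (partialComp F (i 0) m x : ℂ)
                  * (PC f x * pdSeq (Fin.cons m f) h (F x)) := by
        intro f
        rw [pd_mul (dOn (hPCc f)) (hSeqCompD f)]
        congr 1
        rw [pd_comp hFx ((pdSeq_contDiff f hh).differentiable (by simp) (F x))]
        rw [Finset.mul_sum]
        refine Finset.sum_congr rfl fun m _ => ?_
        rw [pdSeq_cons]
        ring
      have eLow : ∀ q ∈ L,
          pd (i 0) (fun z => q.1 z * (q.2.foldr pd h) (F z)) x
            = pd (i 0) q.1 x * (q.2.foldr pd h) (F x)
              + ∑ m, (q.1 x * (partialComp F (i 0) m x : ℂ))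
                  * (((m :: q.2).foldr pd h) (F x)) := by
        intro q hq
        rw [pd_mul (dOn (hL q hq).2) (hCompD q.2)]
        congr 1
        rw [pd_comp hFx ((pdL_contDiff q.2 hh).differentiable (by simp) (F x))]
        rw [Finset.mul_sum]
        refine Finset.sum_congr rfl fun m _ => ?_
        simp only [List.foldr_cons]
        ring
      simp only [eTop]
      rw [List.map_congr_left eLow]
      rw [Finset.sum_add_distrib]
      rw [list_sum_map_add (fun q => pd (i 0) q.1 x * (q.2.foldr pd h) (F x))
        (fun q => ∑ m, (q.1 x * (partialComp F (i 0) m x : ℂ))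
          * (((m :: q.2).foldr pd h) (F x))) L]
      -- now transform the RHS
      have hTop' : (∑ f : Fin (n+1) → Fin r,
            (∏ j, (partialComp F (i j) (f j) x : ℂ)) * pdSeq f h (F x))
          = ∑ f : Fin n → Fin r, ∑ m : Fin r, (partialComp F (i 0) m x : ℂ)
              * (PC f x * pdSeq (Fin.cons m f) h (F x)) := by
        rw [← (Fin.consEquiv fun _ => Fin r).sum_comp
          (fun f : Fin (n+1) → Fin r =>
            (∏ j, (partialComp F (i j) (f j) x : ℂ)) * pdSeq f h (F x)),
          Fintype.sum_prod_type, Finset.sum_comm]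
        refine Finset.sum_congr rfl fun f _ => Finset.sum_congr rfl fun m _ => ?_
        rw [show ((Fin.consEquiv fun _ => Fin r) (m, f) : Fin (n+1) → Fin r)
          = Fin.cons m f from rfl]
        rw [Fin.prod_univ_succ]
        simp only [Fin.cons_zero, Fin.cons_succ, hPC]
        ring
      rw [hTop']
      rw [List.map_append, List.map_append, List.sum_append, List.sum_append,
        List.map_map, List.map_map, List.map_flatMap]
      rw [list_sum_flatMap]
      have hP1 : (List.map ((fun q => q.1 x * List.foldr pd h q.2 (F x))
            ∘ fun f => (pd (i 0) (PC f), List.ofFn f)) Finset.univ.toList).sum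
          = ∑ f : Fin n → Fin r, pd (i 0) (PC f) x * pdSeq f h (F x) := by
        rw [Finset.sum_map_toList]
        exact Finset.sum_congr rfl fun f _ => rfl
      have hP2 : (List.map ((fun q => q.1 x * List.foldr pd h q.2 (F x))
            ∘ fun q => (pd (i 0) q.1, q.2)) L).sum
          = (List.map (fun q => pd (i 0) q.1 x * List.foldr pd h q.2 (F x)) L).sum := rfl
      have hP3 : (List.map (fun a : ((Fin d → ℝ) → ℂ) × List (Fin r) =>
            (List.map (fun q : ((Fin d → ℝ) → ℂ) × List (Fin r) =>
                q.1 x * List.foldr pd h q.2 (F x))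
              (List.map (fun m => (fun x => a.1 x * (partialComp F (i 0) m x : ℂ), m :: a.2))
                Finset.univ.toList)).sum) L).sum
          = (List.map (fun q => ∑ m : Fin r,
              q.1 x * (partialComp F (i 0) m x : ℂ) * List.foldr pd h (m :: q.2) (F x)) L).sum := by
        refine congrArg _ (List.map_congr_left fun q _ => ?_)
        rw [List.map_map, Finset.sum_map_toList]
        exact Finset.sum_congr rfl fun m _ => rfl
      rw [hP1, hP2, hP3]
      ring

private lemma list_fiber_sum {α β : Type*} [Fintype β] [DecidableEq β] (φ : α → β)
    (g : α → ℂ) :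
    ∀ L : List α, ∑ b : β, ((L.filter fun q => decide (φ q = b)).map g).sum = (L.map g).sum
  | [] => by simp
  | q :: L => by
    have hstep : ∀ b : β, (((q :: L).filter fun q' => decide (φ q' = b)).map g).sum
        = (if φ q = b then g q else 0) + ((L.filter fun q' => decide (φ q' = b)).map g).sum := by
      intro b
      by_cases hb : φ q = b <;> simp [List.filter_cons, hb]
    simp only [hstep]
    rw [Finset.sum_add_distrib, list_fiber_sum φ g L]
    simp [Finset.sum_ite_eq]

/-- structural Faà di Bruno: for a smooth map `F : U → ℝ^r` and
indices `i₁, …, iₙ` there is a smooth family `c` of constant-coefficient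
differential operators of order `≤ n − 1` (encoded by their coefficients on the
multi-indices `a` with `|a| ≤ n`, vanishing when `|a| ≥ n`), depending only on `F`
and the indices, such that for every smooth `h : ℝ^r → ℂ` and `p ∈ U`,
`∂_{x_{i₁}}⋯∂_{x_{iₙ}}(h ∘ F)(p)` equals
`[(∏_j Σ_m ∂_{x_{i_j}}F^m(p) ∂_{x_m}) h](F p)` plus `(c(p) h)(F p)`. -/
theorem stmt12 (d r n : ℕ) (hn : 1 ≤ n)
    (U : Set (Fin d → ℝ)) (hU : IsOpen U)
    (F : (Fin d → ℝ) → (Fin r → ℝ)) (hF : ContDiffOn ℝ (⊤ : ℕ∞) F U)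
    (i : Fin n → Fin d) :
    ∃ c : (Fin d → ℝ) → (Fin r → Fin (n + 1)) → ℂ,
      (∀ a : Fin r → Fin (n + 1), n ≤ ∑ m, (a m : ℕ) → ∀ x, c x a = 0) ∧
      (∀ a : Fin r → Fin (n + 1), ContDiffOn ℝ (⊤ : ℕ∞) (fun x => c x a) U) ∧
      ∀ h : (Fin r → ℝ) → ℂ, ContDiff ℝ (⊤ : ℕ∞) h → ∀ p ∈ U,
        pdSeq i (fun y => h (F y)) p =
          ((List.ofFn i).foldr
              (fun ij g => fun y => ∑ m, (partialComp F ij m p : ℂ) * pd m g y) h)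
            (F p)
          + ∑ a : Fin r → Fin (n + 1),
              c p a * pdMulti (fun m => (a m : ℕ)) h (F p) := by
  obtain ⟨L, hL, hEq⟩ := mainExpand hU hF n i
  set aOf : (((Fin d → ℝ) → ℂ) × List (Fin r)) → (Fin r → Fin (n + 1)) :=
    fun q m => ⟨q.2.count m % (n + 1), Nat.mod_lt _ (by omega)⟩ with haOf
  refine ⟨fun x a => ((L.filter fun q => decide (aOf q = a)).map fun q => q.1 x).sum,
    ?_, ?_, ?_⟩
  · intro a ha x
    have hnil : (L.filter fun q => decide (aOf q = a)) = [] := by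
      rw [List.filter_eq_nil_iff]
      intro q hq hdec
      have haq : aOf q = a := of_decide_eq_true hdec
      have hlen : q.2.length < n := (hL q hq).1
      have hcnt : ∀ m, ((a m : ℕ)) = q.2.count m := by
        intro m
        rw [← haq]
        have h1 : q.2.count m < n + 1 :=
          lt_of_le_of_lt (List.count_le_length) (by omega)
        simp [haOf, Nat.mod_eq_of_lt h1]
      have hsum : ∑ m, (a m : ℕ) = q.2.length := by
        rw [show (∑ m, (a m : ℕ)) = ∑ m, q.2.count m from
          Finset.sum_congr rfl fun m _ => hcnt m]
        exact sum_count_eq_length q.2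
      omega
    show ((L.filter fun q => decide (aOf q = a)).map fun q => q.1 x).sum = 0
    rw [hnil]; simp
  · intro a
    exact contDiffOn_list_sum (fun q => q.1) _ fun q hq => (hL q (List.mem_filter.1 hq).1).2
  · intro h hh p hp
    rw [hEq h hh p hp]
    congr 1
    · exact (congrFun (opExpand (fun ij m => (partialComp F ij m p : ℂ)) hh n i) (F p)).symm
    · have hs : ∀ a : Fin r → Fin (n + 1),
          (((L.filter fun q => decide (aOf q = a)).map fun q => q.1 p).sum)
              * pdMulti (fun m => (a m : ℕ)) h (F p)
            = ((L.filter fun q => decide (aOf q = a)).map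
                fun q => q.1 p * (q.2.foldr pd h) (F p)).sum := by
        intro a
        rw [← List.sum_map_mul_right]
        refine congrArg _ (List.map_congr_left fun q hq => ?_)
        obtain ⟨hqL, hdec⟩ := List.mem_filter.1 hq
        have haq : aOf q = a := of_decide_eq_true hdec
        have hlen : q.2.length < n := (hL q hqL).1
        have hcnt : (fun m => (a m : ℕ)) = fun m => q.2.count m := by
          funext m
          rw [← haq]
          have h1 : q.2.count m < n + 1 :=
            lt_of_le_of_lt (List.count_le_length) (by omega)
          simp [haOf, Nat.mod_eq_of_lt h1]
        rw [hcnt, ← pdL_eq_pdMulti hh q.2]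
      refine Eq.symm ?_
      calc ∑ a : Fin r → Fin (n + 1),
            (((L.filter fun q => decide (aOf q = a)).map fun q => q.1 p).sum)
              * pdMulti (fun m => (a m : ℕ)) h (F p)
          = ∑ a : Fin r → Fin (n + 1),
              ((L.filter fun q => decide (aOf q = a)).map
                fun q => q.1 p * (q.2.foldr pd h) (F p)).sum :=
            Finset.sum_congr rfl fun a _ => hs a
        _ = (L.map fun q => q.1 p * (q.2.foldr pd h) (F p)).sum := list_fiber_sum aOf _ L
end

section
/- Let f(z) = a·z + b be an affine self-map of ℂ with |a| > 1 (and a ≠ 1), let V be an infinite-dimensional quasi-Banach space of entire functions with continuous inclusion into 𝒪(ℂ) such that the composition operator C_f h = h∘f is a bounded operator on V. Derive a contradiction; equivalently, if C_f is bounded on such V with f(z) = az + b affine, then |a| ≤ 1. -/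
/-!
At the fixed point `p = b / (1 - a)` of `f z = a z + b` the chain rule gives
`(h ∘ f)⁽ⁿ⁾ p = aⁿ h⁽ⁿ⁾ p`, so `h ↦ h⁽ⁿ⁾ p` is an eigenfunctional of `C_f` with eigenvalue `aⁿ`.
Iterating `C_f`, a functional bounded by the quasi-norm can only be such an eigenfunctional if
`|a|ⁿ ≤ ‖C_f‖`, so for large `n` every `h ∈ V` has `h⁽ⁿ⁾ p = 0`. By Taylor expansion at `p`,
`V` then embeds into a space of polynomials of bounded degree, contradicting infinite dimension.
-/

open scoped Nat

theorem iteratedDeriv_comp_mul_add {𝕜 F : Type*} [NontriviallyNormedField 𝕜]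
    [NormedAddCommGroup F] [NormedSpace 𝕜 F] {n : ℕ} {f : 𝕜 → F} (hf : ContDiff 𝕜 n f)
    (a b x : 𝕜) :
    iteratedDeriv n (fun z => f (a * z + b)) x = a ^ n • iteratedDeriv n f (a * x + b) := by
  have hshift : ContDiff 𝕜 n fun w => f (w + b) := hf.comp (contDiff_id.add contDiff_const)
  rw [iteratedDeriv_comp_const_smul hshift a, iteratedDeriv_comp_add_const]

theorem Complex.mem_span_pow_sub_of_iteratedDeriv_eq_zero {f : ℂ → ℂ} (hf : Differentiable ℂ f)
    {c : ℂ} {N : ℕ} (hN : ∀ n, N ≤ n → iteratedDeriv n f c = 0) :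
    f ∈ Submodule.span ℂ (Set.range fun i : Fin N => fun z : ℂ => (z - c) ^ (i : ℕ)) := by
  have htaylor : f = ∑ i ∈ Finset.range N,
      ((i ! : ℂ)⁻¹ * iteratedDeriv i f c) • fun z : ℂ => (z - c) ^ i := by
    funext z
    rw [← Complex.taylorSeries_eq_of_entire' c z hf, tsum_eq_sum (s := Finset.range N)]
    · simp [Finset.sum_apply, mul_assoc]
    · intro n hn
      simp [hN n (by simpa using hn)]
  rw [htaylor]
  refine Submodule.sum_mem _ fun i hi => Submodule.smul_mem _ _ (Submodule.subset_span ?_)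
  exact ⟨⟨i, Finset.mem_range.mp hi⟩, rfl⟩

theorem iterate_le_pow_mul {V : Type*} {q : V → ℝ} {T : V → V} {M : ℝ} (hM : 0 ≤ M)
    (hT : ∀ v, q (T v) ≤ M * q v) (k : ℕ) (v : V) : q (T^[k] v) ≤ M ^ k * q v := by
  induction k with
  | zero => simp
  | succ k ih =>
    calc q (T^[k + 1] v) = q (T (T^[k] v)) := by rw [Function.iterate_succ_apply']
      _ ≤ M * (M ^ k * q v) := (hT _).trans (mul_le_mul_of_nonneg_left ih hM)
      _ = M ^ (k + 1) * q v := by ring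

theorem eq_zero_of_apply_eq_mul_of_bound_lt {V : Type*} {q : V → ℝ} (hq : ∀ v, 0 ≤ q v)
    {T : V → V} {M : ℝ} (hM : 0 ≤ M) (hT : ∀ v, q (T v) ≤ M * q v)
    {d : V → ℂ} {C : ℝ} (hd : ∀ v, ‖d v‖ ≤ C * q v) {μ : ℂ} (hdT : ∀ v, d (T v) = μ * d v)
    (hμ : M < ‖μ‖) (v : V) : d v = 0 := by
  have hμ0 : 0 < ‖μ‖ := hM.trans_lt hμ
  set C' := max C 0
  have hiter : ∀ k : ℕ, d (T^[k] v) = μ ^ k * d v := fun k => by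
    rw [(Function.Semiconj.iterate_right (f := d) (gb := (μ * ·)) hdT k).eq, mul_left_iterate]
  have hdecay : ∀ k : ℕ, ‖d v‖ ≤ C' * q v * (M / ‖μ‖) ^ k := fun k => by
    have hk : ‖μ‖ ^ k * ‖d v‖ ≤ C' * (M ^ k * q v) :=
      calc ‖μ‖ ^ k * ‖d v‖ = ‖d (T^[k] v)‖ := by rw [hiter, norm_mul, norm_pow]
        _ ≤ C' * q (T^[k] v) :=
          (hd _).trans (mul_le_mul_of_nonneg_right (le_max_left _ _) (hq _))
        _ ≤ C' * (M ^ k * q v) :=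
          mul_le_mul_of_nonneg_left (iterate_le_pow_mul hM hT k v) (le_max_right _ _)
    rw [div_pow, mul_div, le_div_iff₀ (pow_pos hμ0 k)]
    linarith
  have hlim : Filter.Tendsto (fun k : ℕ => C' * q v * (M / ‖μ‖) ^ k) Filter.atTop (nhds 0) := by
    simpa using (tendsto_pow_atTop_nhds_zero_of_lt_one (div_nonneg hM hμ0.le)
      ((div_lt_one hμ0).mpr hμ)).const_mul (C' * q v)
  exact norm_le_zero_iff.mp (ge_of_tendsto' hlim hdecay)

theorem stmt16_general (a b : ℂ) (hrep : 1 < ‖a‖)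
    (V : Type*) [AddCommGroup V] [Module ℂ V]
    (q : V → ℝ)
    (hq_nonneg : ∀ v, 0 ≤ q v)
    (ι : V →ₗ[ℂ] (ℂ → ℂ)) (hinj : Function.Injective ι)
    (hent : ∀ v, Differentiable ℂ (ι v))
    (hcont : ∀ (n : ℕ) (p : ℂ), ∃ C : ℝ, ∀ v,
      ‖iteratedDeriv n (ι v) p‖ ≤ C * q v)
    (hinf : ¬ FiniteDimensional ℂ V)
    (T : V →ₗ[ℂ] V)
    (hT : ∀ (v : V) (z : ℂ), ι (T v) z = ι v (a * z + b))
    (M : ℝ) (hbdd : ∀ v, q (T v) ≤ M * q v) :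
    False := by
  have ha : 1 - a ≠ 0 := sub_ne_zero.mpr fun h => hrep.ne (by rw [← h, norm_one])
  set p := b / (1 - a)
  have hp : a * p + b = p := by simp only [p]; field_simp; ring
  have hderiv (n : ℕ) (v : V) :
      iteratedDeriv n (ι (T v)) p = a ^ n * iteratedDeriv n (ι v) p := by
    rw [funext (hT v), iteratedDeriv_comp_mul_add (hent v).contDiff, hp, smul_eq_mul]
  obtain ⟨N, hN⟩ := pow_unbounded_of_one_lt M hrep
  have hvanish (v : V) (n : ℕ) (hn : N ≤ n) : iteratedDeriv n (ι v) p = 0 := by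
    obtain ⟨C, hC⟩ := hcont n p
    have hbdd' (w : V) : q (T w) ≤ max M 0 * q w :=
      (hbdd w).trans (mul_le_mul_of_nonneg_right (le_max_left _ _) (hq_nonneg w))
    refine eq_zero_of_apply_eq_mul_of_bound_lt hq_nonneg (le_max_right M 0) hbdd' hC (hderiv n)
      ?_ v
    rw [norm_pow]
    exact max_lt (hN.trans_le (pow_le_pow_right₀ hrep.le hn)) (pow_pos (one_pos.trans hrep) n)
  set S := Submodule.span ℂ (Set.range fun i : Fin N => fun z : ℂ => (z - p) ^ (i : ℕ))
  have : FiniteDimensional ℂ S := FiniteDimensional.span_of_finite ℂ (Set.finite_range _)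
  have hS (v : V) : ι v ∈ S :=
    Complex.mem_span_pow_sub_of_iteratedDeriv_eq_zero (hent v) (hvanish v)
  exact hinf (Module.Finite.of_injective (ι.codRestrict S hS)
    ((LinearMap.injective_codRestrict_iff hS).mpr hinj))

/-- Let `f(z) = a z + b` with `|a| > 1` (so `a ≠ 1`), and let `V` be an
infinite-dimensional quasi-Banach space of entire functions (quasi-norm `q` with
modulus of concavity `K`, functions realized by an injective linear map `ι`,
continuity of the inclusion being expressed by the boundedness of every derivative
evaluation functional with respect to `q`).  If the composition operator
`C_f : v ↦ (ι v) ∘ f` is a bounded operator `T` on `V`, we get a contradiction. -/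
theorem stmt16 (a b : ℂ) (hrep : 1 < ‖a‖) (ha1 : a ≠ 1)
    (V : Type*) [AddCommGroup V] [Module ℂ V]
    (q : V → ℝ) (K : ℝ) (hK : 1 ≤ K)
    (hq_nonneg : ∀ v, 0 ≤ q v)
    (hq_zero : ∀ v, q v = 0 → v = 0)
    (hq_smul : ∀ (c : ℂ) (v : V), q (c • v) = ‖c‖ * q v)
    (hq_add : ∀ v w, q (v + w) ≤ K * (q v + q w))
    (ι : V →ₗ[ℂ] (ℂ → ℂ)) (hinj : Function.Injective ι)
    (hent : ∀ v, Differentiable ℂ (ι v))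
    (hcont : ∀ (n : ℕ) (p : ℂ), ∃ C : ℝ, ∀ v,
      ‖iteratedDeriv n (ι v) p‖ ≤ C * q v)
    (hinf : ¬ FiniteDimensional ℂ V)
    (T : V →ₗ[ℂ] V)
    (hT : ∀ (v : V) (z : ℂ), ι (T v) z = ι v (a * z + b))
    (M : ℝ) (hbdd : ∀ v, q (T v) ≤ M * q v) :
    False :=
  stmt16_general a b hrep V q hq_nonneg ι hinj hent hcont hinf T hT M hbdd
end

section
/- Let f : ℂ → ℂ be holomorphic with a fixed point p (f(p) = p). Then for every n ≥ 0 and every entire function h, the n-th derivative (h∘f)^{(n)}(p) equals f′(p)ⁿ · h^{(n)}(p) + Σ_{j<n} c_j · h^{(j)}(p), where the coefficients c_j depend only on the derivatives of f at p (not on h). -/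
/-!
Differentiating `x ↦ a x * h⁽ʲ⁾(f x)` gives `a' x * h⁽ʲ⁾(f x) + a x * f' x * h⁽ʲ⁺¹⁾(f x)`: the order
in `h` rises by at most one, and only through the second term, which multiplies the coefficient
by `f'`. By induction, `(h ∘ f)⁽ⁿ⁾(x) - f'(x)ⁿ h⁽ⁿ⁾(f x)` is a combination of `h⁽ʲ⁾(f x)`, `j < n`,
whose coefficients are smooth functions built from `f` alone; evaluate at the fixed point.
-/

open scoped ContDiff

variable {𝕜 : Type*} [NontriviallyNormedField 𝕜]

theorem ContDiff.iteratedDeriv {h : 𝕜 → 𝕜} (hh : ContDiff 𝕜 ∞ h) (k : ℕ) :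
    ContDiff 𝕜 ∞ (iteratedDeriv k h) :=
  iteratedDeriv_eq_iterate (f := h) ▸ hh.iterate_deriv k

theorem deriv_mul_iteratedDeriv_comp {a f h : 𝕜 → 𝕜} (ha : ContDiff 𝕜 ∞ a)
    (hf : ContDiff 𝕜 ∞ f) (hh : ContDiff 𝕜 ∞ h) (j : ℕ) (x : 𝕜) :
    deriv (fun y => a y * iteratedDeriv j h (f y)) x =
      deriv a x * iteratedDeriv j h (f x) + a x * deriv f x * iteratedDeriv (j + 1) h (f x) := by
  have hjh : HasDerivAt (iteratedDeriv j h) (iteratedDeriv (j + 1) h (f x)) (f x) := by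
    rw [iteratedDeriv_succ]
    exact ((hh.iteratedDeriv j).differentiable (by simp) _).hasDerivAt
  have hcomp : HasDerivAt (fun y => iteratedDeriv j h (f y))
      (iteratedDeriv (j + 1) h (f x) * deriv f x) x :=
    hjh.comp x (hf.differentiable (by simp) x).hasDerivAt
  exact ((ha.differentiable (by simp) x).hasDerivAt.mul hcomp).deriv.trans (by ring)

def IsLowerOrderOp (f : 𝕜 → 𝕜) (n : ℕ) (T : (𝕜 → 𝕜) → 𝕜 → 𝕜) : Prop :=
  ∃ a : Fin n → 𝕜 → 𝕜, (∀ j, ContDiff 𝕜 ∞ (a j)) ∧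
    ∀ h, ContDiff 𝕜 ∞ h → ∀ x, T h x = ∑ j, a j x * iteratedDeriv j h (f x)

namespace IsLowerOrderOp

variable {f : 𝕜 → 𝕜} {n : ℕ} {T S : (𝕜 → 𝕜) → 𝕜 → 𝕜}

theorem congr (hT : IsLowerOrderOp f n T)
    (hST : ∀ h, ContDiff 𝕜 ∞ h → ∀ x, S h x = T h x) : IsLowerOrderOp f n S := by
  obtain ⟨a, ha, hTa⟩ := hT
  exact ⟨a, ha, fun h hh x => (hST h hh x).trans (hTa h hh x)⟩

theorem zero : IsLowerOrderOp f n (fun _ _ => 0) :=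
  ⟨0, fun _ => contDiff_const, fun _ _ _ => by simp⟩

theorem add (hT : IsLowerOrderOp f n T) (hS : IsLowerOrderOp f n S) :
    IsLowerOrderOp f n (fun h x => T h x + S h x) := by
  obtain ⟨a, ha, hTa⟩ := hT
  obtain ⟨b, hb, hSb⟩ := hS
  refine ⟨a + b, fun j => (ha j).add (hb j), fun h hh x => ?_⟩
  simp only [hTa h hh, hSb h hh, Pi.add_apply, add_mul, Finset.sum_add_distrib]

theorem sum {ι : Type*} (s : Finset ι) {T : ι → (𝕜 → 𝕜) → 𝕜 → 𝕜}
    (hT : ∀ i ∈ s, IsLowerOrderOp f n (T i)) :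
    IsLowerOrderOp f n (fun h x => ∑ i ∈ s, T i h x) := by
  classical
  induction s using Finset.induction_on with
  | empty => simpa using zero
  | insert i s hi ih =>
    simp only [Finset.sum_insert hi]
    exact (hT i (s.mem_insert_self i)).add (ih fun k hk => hT k (Finset.mem_insert_of_mem hk))

theorem monomial {a : 𝕜 → 𝕜} (ha : ContDiff 𝕜 ∞ a) {j : ℕ} (hj : j < n) :
    IsLowerOrderOp f n (fun h x => a x * iteratedDeriv j h (f x)) := by
  classical
  refine ⟨Pi.single ⟨j, hj⟩ a, fun i => ?_, fun h _ x => ?_⟩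
  · by_cases hi : i = ⟨j, hj⟩
    · subst hi; simpa using ha
    · rw [Pi.single_eq_of_ne hi]
      exact contDiff_const
  · rw [Fintype.sum_eq_single ⟨j, hj⟩ fun i hi => by simp [hi]]
    simp

theorem deriv (hf : ContDiff 𝕜 ∞ f) (hT : IsLowerOrderOp f n T) :
    IsLowerOrderOp f (n + 1) (fun h => deriv (T h)) := by
  obtain ⟨a, ha, hTa⟩ := hT
  have hterm (j : Fin n) : IsLowerOrderOp f (n + 1) fun h x =>
      _root_.deriv (a j) x * iteratedDeriv j h (f x) +
        a j x * _root_.deriv f x * iteratedDeriv (j + 1) h (f x) :=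
    (monomial (ha j).deriv' (by omega)).add
      (monomial ((ha j).mul hf.deriv') (by omega))
  refine (sum Finset.univ fun j _ => hterm j).congr fun h hh x => ?_
  rw [show T h = fun y => ∑ j, a j y * iteratedDeriv j h (f y) from funext (hTa h hh),
    deriv_fun_sum fun j _ => ?_]
  · exact Finset.sum_congr rfl fun j _ => deriv_mul_iteratedDeriv_comp (ha j) hf hh j x
  · exact ((ha j).mul ((hh.iteratedDeriv j).comp hf)).differentiable (by simp) x

end IsLowerOrderOp

theorem isLowerOrderOp_iteratedDeriv_comp_sub {f : 𝕜 → 𝕜} (hf : ContDiff 𝕜 ∞ f) (n : ℕ) :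
    IsLowerOrderOp f n fun h x =>
      iteratedDeriv n (h ∘ f) x - deriv f x ^ n * iteratedDeriv n h (f x) := by
  induction n with
  | zero => exact IsLowerOrderOp.zero.congr fun h _ x => by simp
  | succ n ih =>
    have hfn : ContDiff 𝕜 ∞ fun y => deriv f y ^ n := hf.deriv'.pow n
    refine ((IsLowerOrderOp.monomial hfn.deriv' n.lt_succ_self).add (ih.deriv hf)).congr
      fun h hh x => ?_
    have hcomp := (hh.comp hf).iteratedDeriv n
    have hlead : ContDiff 𝕜 ∞ fun y => deriv f y ^ n * iteratedDeriv n h (f y) :=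
      hfn.mul ((hh.iteratedDeriv n).comp hf)
    rw [deriv_fun_sub (hcomp.differentiable (by simp) x) (hlead.differentiable (by simp) x),
      deriv_mul_iteratedDeriv_comp hfn hf hh n x, iteratedDeriv_succ]
    ring

/-- If `f` is holomorphic with fixed point `p`, then for every `n` there
are coefficients `c j` depending only on `f` (not on `h`) such that for every entire
`h`, `(h ∘ f)⁽ⁿ⁾(p) = f'(p)ⁿ h⁽ⁿ⁾(p) + Σ_{j<n} c j · h⁽ʲ⁾(p)`. -/
theorem stmt17 (f : ℂ → ℂ) (hf : Differentiable ℂ f)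
    (p : ℂ) (hp : f p = p) (n : ℕ) :
    ∃ c : Fin n → ℂ, ∀ h : ℂ → ℂ, Differentiable ℂ h →
      iteratedDeriv n (h ∘ f) p =
        (deriv f p) ^ n * iteratedDeriv n h p +
          ∑ j : Fin n, c j * iteratedDeriv (j : ℕ) h p := by
  obtain ⟨a, -, ha⟩ := isLowerOrderOp_iteratedDeriv_comp_sub hf.contDiff n
  refine ⟨fun j => a j p, fun h hh => ?_⟩
  have hrest := ha h hh.contDiff p
  dsimp only at hrest
  rw [hp] at hrest
  linear_combination hrest
end
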